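/- (Theorem 3, edge-level form) Under the two-stage cluster design with cluster in-experiment probability p and treatment probability π, the estimator τ̂_c(p,π) = τ̂¹_c(p,π) + τ̂²_c(p,π) satisfies E[τ̂_c(p,π)] = (1/n) Σ_{i ≠ j} (β_{i,j} + γ_{i,j} + 2κ_{i,j} ζ_{i,j}), and its bias for the total treatment effect τ is E[τ̂_c(p,π) − τ] = −(1/n) Σ_{i ≠ j} (1 − 2κ_{i,j}) ζ_{i,j}, where κ_{i,j} = π if units i and j belong to the same cluster and κ_{i,j} = pπ otherwise. In particular, when π = 1/2 the bias equals −((1 − p)/n) Σ_{(i,j): i ≠ j, c(i) ≠ c(j)} ζ_{i,j}, i.e., only cross-cluster interaction terms contribute. -/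

import Mathlib

open Finset

noncomputable section

/-- Real-valued indicator of a Boolean. -/
def ind (b : Bool) : ℝ := if b then 1 else 0

/-- Dyadic linear potential-outcome model for an ordered pair `(i, j)`:
`z_{i,j}(W) = α_{i,j} + β_{i,j} W_i + γ_{i,j} W_j + ζ_{i,j} W_i W_j`. -/
def zDyad {n : ℕ} (α β γ ζ : Fin n → Fin n → ℝ) (W : Fin n → ℝ) (i j : Fin n) : ℝ :=
  α i j + β i j * W i + γ i j * W j + ζ i j * W i * W j

/-- Upstream-aggregated outcome `Y_j(W) = Σ_{i ≠ j} z_{i,j}(W)`. -/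
def Yagg {n : ℕ} (α β γ ζ : Fin n → Fin n → ℝ) (W : Fin n → ℝ) (j : Fin n) : ℝ :=
  ∑ i ∈ ({j}ᶜ : Finset (Fin n)), zDyad α β γ ζ W i j

/-- Downstream-aggregated outcome (diffusion metric) `D_j(W) = Σ_{i ≠ j} z_{j,i}(W)`. -/
def Dagg {n : ℕ} (α β γ ζ : Fin n → Fin n → ℝ) (W : Fin n → ℝ) (j : Fin n) : ℝ :=
  ∑ i ∈ ({j}ᶜ : Finset (Fin n)), zDyad α β γ ζ W j i

/-- Expectation over the two-stage cluster design: `b ∈ {0,1}^C` are i.i.d.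
Bernoulli(`p`) cluster in-experiment indicators and `u ∈ {0,1}^n` are i.i.d.
Bernoulli(`q`) treatment coins, all mutually independent. -/
def expectBU (n : ℕ) {C : Type} [Fintype C] [DecidableEq C] (p q : ℝ)
    (f : (C → Bool) → (Fin n → Bool) → ℝ) : ℝ :=
  ∑ b : C → Bool, ∑ u : Fin n → Bool,
    (∏ k, if b k then p else 1 - p) * (∏ i, if u i then q else 1 - q) * f b u

/-- Realized treatment in the two-stage cluster design: `V_i = B_{c(i)}`,
`W_i = V_i U_i` (units outside the experiment receive control). -/
def treatBU {n : ℕ} {C : Type} (c : Fin n → C) (b : C → Bool) (u : Fin n → Bool) :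
    Fin n → ℝ :=
  fun i => ind (b (c i) && u i)

/-- Horvitz–Thompson estimator built from `Y` in the two-stage cluster design:
`τ̂¹_c(p,q)(b,u) = (1/n) Σ_i [V_i W_i Y_i(W)/(pq) − V_i (1 − W_i) Y_i(W)/(p(1 − q))]`. -/
def tauHat1Clu {n : ℕ} {C : Type} (α β γ ζ : Fin n → Fin n → ℝ) (c : Fin n → C)
    (p q : ℝ) (b : C → Bool) (u : Fin n → Bool) : ℝ :=
  (1 / (n : ℝ)) * ∑ i,
    (ind (b (c i)) * treatBU c b u i * Yagg α β γ ζ (treatBU c b u) i / (p * q) -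
      ind (b (c i)) * (1 - treatBU c b u i) * Yagg α β γ ζ (treatBU c b u) i /
        (p * (1 - q)))

/-- Horvitz–Thompson estimator built from `D` in the two-stage cluster design. -/
def tauHat2Clu {n : ℕ} {C : Type} (α β γ ζ : Fin n → Fin n → ℝ) (c : Fin n → C)
    (p q : ℝ) (b : C → Bool) (u : Fin n → Bool) : ℝ :=
  (1 / (n : ℝ)) * ∑ i,
    (ind (b (c i)) * treatBU c b u i * Dagg α β γ ζ (treatBU c b u) i / (p * q) -
      ind (b (c i)) * (1 - treatBU c b u i) * Dagg α β γ ζ (treatBU c b u) i /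
        (p * (1 - q)))

/-! Both estimators are sums over ordered pairs `(i, j)` of the Horvitz–Thompson weight
`h_j = V_j W_j / (pq) - V_j (1 - W_j) / (p (1 - q))` times a dyadic outcome, which is affine in
`W_j`, `W_i` and `W_i W_j`. Writing `W = V U`, every such product is, on `{0,1}`-valued
indicators, a combination of monomials in the independent Bernoulli variables `B` and `U`, whose
expectations are `p ^ |S| q ^ |T|`. This gives `E[h_j] = E[h_j W_i] = 0`, `E[h_j W_j] = 1` and
`E[h_j W_i W_j] = q E[V_i V_j] / p = κ_{i,j}`, so each pair contributes its own-treatment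
coefficient plus `κ_{i,j} ζ`; the `Y`-estimator collects `γ`, the `D`-estimator `β`. -/

lemma ind_and (x y : Bool) : ind (x && y) = ind x * ind y := by
  cases x <;> cases y <;> simp [ind]

lemma sum_prod_bernoulli_mul {ι : Type*} [Fintype ι] [DecidableEq ι] (r : ℝ)
    (g : ι → Bool → ℝ) :
    ∑ x : ι → Bool, ∏ i, (if x i then r else 1 - r) * g i (x i) =
      ∏ i, (r * g i true + (1 - r) * g i false) := by
  rw [← Fintype.prod_sum (fun i (x : Bool) => (if x then r else 1 - r) * g i x)]
  simp

section Expectation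

variable {n : ℕ} {C : Type} [Fintype C] [DecidableEq C] {p q : ℝ}

lemma expectBU_congr {f g : (C → Bool) → (Fin n → Bool) → ℝ} (h : ∀ b u, f b u = g b u) :
    expectBU n p q f = expectBU n p q g := by
  simp only [expectBU, h]

lemma expectBU_sum {ι : Type*} (s : Finset ι) (f : ι → (C → Bool) → (Fin n → Bool) → ℝ) :
    expectBU n p q (fun b u => ∑ x ∈ s, f x b u) = ∑ x ∈ s, expectBU n p q (f x) := by
  simp only [expectBU, Finset.mul_sum]
  rw [Finset.sum_comm (s := s)]
  refine Finset.sum_congr rfl fun _ _ => ?_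
  exact Finset.sum_comm

lemma expectBU_add (f g : (C → Bool) → (Fin n → Bool) → ℝ) :
    expectBU n p q (fun b u => f b u + g b u) = expectBU n p q f + expectBU n p q g := by
  simp only [expectBU, mul_add, Finset.sum_add_distrib]

lemma expectBU_sub (f g : (C → Bool) → (Fin n → Bool) → ℝ) :
    expectBU n p q (fun b u => f b u - g b u) = expectBU n p q f - expectBU n p q g := by
  simp only [expectBU, mul_sub, Finset.sum_sub_distrib]

lemma expectBU_const_mul (r : ℝ) (f : (C → Bool) → (Fin n → Bool) → ℝ) :
    expectBU n p q (fun b u => r * f b u) = r * expectBU n p q f := by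
  simp only [expectBU, Finset.mul_sum]
  exact Finset.sum_congr rfl fun _ _ => Finset.sum_congr rfl fun _ _ => by ring

lemma expectBU_prod_mul_prod (gB : C → Bool → ℝ) (gU : Fin n → Bool → ℝ) :
    expectBU n p q (fun b u => (∏ k, gB k (b k)) * ∏ i, gU i (u i)) =
      (∏ k, (p * gB k true + (1 - p) * gB k false)) *
        ∏ i, (q * gU i true + (1 - q) * gU i false) := by
  rw [← sum_prod_bernoulli_mul, ← sum_prod_bernoulli_mul, Finset.sum_mul_sum]
  refine Finset.sum_congr rfl fun b _ => Finset.sum_congr rfl fun u _ => ?_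
  simp only [Finset.prod_mul_distrib]
  ring

def indMonomial (S : Finset C) (T : Finset (Fin n)) (b : C → Bool) (u : Fin n → Bool) : ℝ :=
  (∏ k ∈ S, ind (b k)) * ∏ i ∈ T, ind (u i)

lemma expectBU_indMonomial (S : Finset C) (T : Finset (Fin n)) :
    expectBU n p q (indMonomial S T) = p ^ S.card * q ^ T.card := by
  have h := expectBU_prod_mul_prod (p := p) (q := q)
    (fun k x => if k ∈ S then ind x else 1) (fun i x => if i ∈ T then ind x else 1)
  have bernoulli_mean (r : ℝ) (P : Prop) [Decidable P] :
      r * (if P then ind true else 1) + (1 - r) * (if P then ind false else 1) =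
        if P then r else 1 := by
    split_ifs <;> simp [ind]
  simp only [Fintype.prod_ite_mem, bernoulli_mean, Finset.prod_const] at h
  exact h

end Expectation

lemma Finset.sum_sum_compl_singleton_comm {ι M : Type*} [Fintype ι] [DecidableEq ι]
    [AddCommMonoid M] (f : ι → ι → M) :
    ∑ j, ∑ i ∈ ({j}ᶜ : Finset ι), f i j = ∑ j, ∑ i ∈ ({j}ᶜ : Finset ι), f j i :=
  Finset.sum_comm' fun _ _ => by simp [ne_comm]

lemma Yagg_one_sub_Yagg_zero {n : ℕ} (α β γ ζ : Fin n → Fin n → ℝ) (j : Fin n) :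
    Yagg α β γ ζ (fun _ => 1) j - Yagg α β γ ζ (fun _ => 0) j =
      ∑ i ∈ ({j}ᶜ : Finset (Fin n)), (β i j + γ i j + ζ i j) := by
  simp only [Yagg, zDyad, ← Finset.sum_sub_distrib]
  ring_nf

section Estimator

variable {n : ℕ} {C : Type} (α β γ ζ : Fin n → Fin n → ℝ) (c : Fin n → C) (p q : ℝ)

def htWeight (b : C → Bool) (u : Fin n → Bool) (i : Fin n) : ℝ :=
  ind (b (c i)) * treatBU c b u i / (p * q) -
    ind (b (c i)) * (1 - treatBU c b u i) / (p * (1 - q))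

lemma tauHat1Clu_eq_sum_htWeight_mul (b : C → Bool) (u : Fin n → Bool) :
    tauHat1Clu α β γ ζ c p q b u = (1 / (n : ℝ)) * ∑ j, ∑ i ∈ ({j}ᶜ : Finset (Fin n)),
      htWeight c p q b u j * zDyad α β γ ζ (treatBU c b u) i j := by
  unfold tauHat1Clu Yagg
  congr 1
  refine Finset.sum_congr rfl fun j _ => ?_
  rw [← Finset.mul_sum, htWeight]
  ring

lemma tauHat2Clu_eq_sum_htWeight_mul (b : C → Bool) (u : Fin n → Bool) :
    tauHat2Clu α β γ ζ c p q b u = (1 / (n : ℝ)) * ∑ j, ∑ i ∈ ({j}ᶜ : Finset (Fin n)),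
      htWeight c p q b u j * zDyad α β γ ζ (treatBU c b u) j i := by
  unfold tauHat2Clu Dagg
  congr 1
  refine Finset.sum_congr rfl fun j _ => ?_
  rw [← Finset.mul_sum, htWeight]
  ring

variable {p q} [DecidableEq C]

lemma htWeight_mul_affine_eq {i j : Fin n} (hij : i ≠ j) (a s t r : ℝ)
    (b : C → Bool) (u : Fin n → Bool) :
    htWeight c p q b u j *
        (a + s * treatBU c b u j + t * treatBU c b u i + r * treatBU c b u i * treatBU c b u j) =
      ((a + s) / (p * q) + a / (p * (1 - q))) * indMonomial {c j} {j} b u -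
        a / (p * (1 - q)) * indMonomial {c j} ∅ b u -
        t / (p * (1 - q)) * indMonomial {c i, c j} {i} b u +
        ((t + r) / (p * q) + t / (p * (1 - q))) * indMonomial {c i, c j} {i, j} b u := by
  simp only [htWeight, treatBU, indMonomial, ind_and, Finset.prod_singleton,
    Finset.prod_empty, Finset.prod_pair hij]
  by_cases hc : c i = c j
  · rw [hc, Finset.pair_eq_singleton, Finset.prod_singleton]
    cases b (c j) <;> cases u i <;> cases u j <;>
      simp only [ind, Bool.false_eq_true, ↓reduceIte] <;> ring
  · rw [Finset.prod_pair hc]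
    cases b (c i) <;> cases b (c j) <;> cases u i <;> cases u j <;>
      simp only [ind, Bool.false_eq_true, ↓reduceIte] <;> ring

variable [Fintype C]

lemma expectBU_htWeight_mul_affine (hp : p ≠ 0) (hq₀ : q ≠ 0) (hq₁ : q ≠ 1) {i j : Fin n}
    (hij : i ≠ j) (a s t r : ℝ) :
    expectBU n p q (fun b u => htWeight c p q b u j *
        (a + s * treatBU c b u j + t * treatBU c b u i + r * treatBU c b u i * treatBU c b u j)) =
      s + (if c i = c j then q else p * q) * r := by
  have hq₁' : 1 - q ≠ 0 := sub_ne_zero.mpr hq₁.symm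
  have card_clusters : ({c i, c j} : Finset C).card = if c i = c j then 1 else 2 := by
    split_ifs with hc
    · simp [hc]
    · exact Finset.card_pair hc
  simp only [htWeight_mul_affine_eq c hij]
  rw [expectBU_add, expectBU_sub, expectBU_sub, expectBU_const_mul, expectBU_const_mul,
    expectBU_const_mul, expectBU_const_mul, expectBU_indMonomial, expectBU_indMonomial,
    expectBU_indMonomial, expectBU_indMonomial]
  simp only [card_clusters, Finset.card_singleton, Finset.card_empty, Finset.card_pair hij]
  split_ifs <;> field_simp <;> ring

lemma expectBU_tauHat1Clu (hp : p ≠ 0) (hq₀ : q ≠ 0) (hq₁ : q ≠ 1) :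
    expectBU n p q (tauHat1Clu α β γ ζ c p q) = (1 / (n : ℝ)) *
      ∑ j, ∑ i ∈ ({j}ᶜ : Finset (Fin n)), (γ i j + (if c i = c j then q else p * q) * ζ i j) := by
  rw [expectBU_congr (tauHat1Clu_eq_sum_htWeight_mul α β γ ζ c p q), expectBU_const_mul,
    expectBU_sum]
  congr 1
  refine Finset.sum_congr rfl fun j _ => ?_
  rw [expectBU_sum]
  refine Finset.sum_congr rfl fun i hi => ?_
  have hij : i ≠ j := by simpa using hi
  rw [← expectBU_htWeight_mul_affine c hp hq₀ hq₁ hij (α i j) (γ i j) (β i j) (ζ i j)]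
  exact expectBU_congr fun b u => by rw [zDyad]; ring

lemma expectBU_tauHat2Clu (hp : p ≠ 0) (hq₀ : q ≠ 0) (hq₁ : q ≠ 1) :
    expectBU n p q (tauHat2Clu α β γ ζ c p q) = (1 / (n : ℝ)) *
      ∑ j, ∑ i ∈ ({j}ᶜ : Finset (Fin n)), (β i j + (if c i = c j then q else p * q) * ζ i j) := by
  rw [expectBU_congr (tauHat2Clu_eq_sum_htWeight_mul α β γ ζ c p q), expectBU_const_mul,
    expectBU_sum, Finset.sum_sum_compl_singleton_comm]
  congr 1
  refine Finset.sum_congr rfl fun j _ => ?_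
  rw [expectBU_sum]
  refine Finset.sum_congr rfl fun i hi => ?_
  have hij : i ≠ j := by simpa using hi
  simp only [@eq_comm _ (c j)]
  rw [← expectBU_htWeight_mul_affine c hp hq₀ hq₁ hij (α j i) (β j i) (γ j i) (ζ j i)]
  exact expectBU_congr fun b u => by rw [zDyad]; ring

lemma expectBU_tauHatClu (hp : p ≠ 0) (hq₀ : q ≠ 0) (hq₁ : q ≠ 1) :
    expectBU n p q (fun b u => tauHat1Clu α β γ ζ c p q b u + tauHat2Clu α β γ ζ c p q b u) =
      (1 / (n : ℝ)) * ∑ j, ∑ i ∈ ({j}ᶜ : Finset (Fin n)),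
        (β i j + γ i j + 2 * (if c i = c j then q else p * q) * ζ i j) := by
  rw [expectBU_add, expectBU_tauHat1Clu α β γ ζ c hp hq₀ hq₁,
    expectBU_tauHat2Clu α β γ ζ c hp hq₀ hq₁, ← mul_add]
  simp only [← Finset.sum_add_distrib]
  congr 1
  exact Finset.sum_congr rfl fun j _ => Finset.sum_congr rfl fun i _ => by ring

lemma expectBU_tauHatClu_sub_totalEffect (hp : p ≠ 0) (hq₀ : q ≠ 0) (hq₁ : q ≠ 1) :
    expectBU n p q (fun b u => tauHat1Clu α β γ ζ c p q b u + tauHat2Clu α β γ ζ c p q b u) -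
        (1 / (n : ℝ)) * ∑ j, (Yagg α β γ ζ (fun _ => 1) j - Yagg α β γ ζ (fun _ => 0) j) =
      -(1 / (n : ℝ)) * ∑ j, ∑ i ∈ ({j}ᶜ : Finset (Fin n)),
        ((1 - 2 * (if c i = c j then q else p * q)) * ζ i j) := by
  simp only [expectBU_tauHatClu α β γ ζ c hp hq₀ hq₁, Yagg_one_sub_Yagg_zero, neg_mul,
    ← mul_sub, ← mul_neg, ← Finset.sum_sub_distrib, ← Finset.sum_neg_distrib]
  congr 1
  exact Finset.sum_congr rfl fun j _ => Finset.sum_congr rfl fun i _ => by ring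

end Estimator

theorem expect_and_bias_tauHatClu_combined_general
    (n : ℕ) (α β γ ζ : Fin n → Fin n → ℝ)
    (C : Type) [Fintype C] [DecidableEq C] (c : Fin n → C)
    (p q : ℝ) (hp0 : 0 < p) (hq0 : 0 < q) (hq1 : q < 1) :
    expectBU n p q
        (fun b u => tauHat1Clu α β γ ζ c p q b u + tauHat2Clu α β γ ζ c p q b u) =
      (1 / (n : ℝ)) * ∑ j, ∑ i ∈ ({j}ᶜ : Finset (Fin n)),
        (β i j + γ i j + 2 * (if c i = c j then q else p * q) * ζ i j) ∧
    expectBU n p q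
        (fun b u => tauHat1Clu α β γ ζ c p q b u + tauHat2Clu α β γ ζ c p q b u) -
        (1 / (n : ℝ)) *
          ∑ j, (Yagg α β γ ζ (fun _ => (1 : ℝ)) j - Yagg α β γ ζ (fun _ => (0 : ℝ)) j) =
      -(1 / (n : ℝ)) * ∑ j, ∑ i ∈ ({j}ᶜ : Finset (Fin n)),
        ((1 - 2 * (if c i = c j then q else p * q)) * ζ i j) ∧
    (q = 1 / 2 →
      expectBU n p q
          (fun b u => tauHat1Clu α β γ ζ c p q b u + tauHat2Clu α β γ ζ c p q b u) -
          (1 / (n : ℝ)) *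
            ∑ j, (Yagg α β γ ζ (fun _ => (1 : ℝ)) j -
              Yagg α β γ ζ (fun _ => (0 : ℝ)) j) =
        -((1 - p) / (n : ℝ)) *
          ∑ j, ∑ i ∈ ({j}ᶜ : Finset (Fin n)).filter (fun i => c i ≠ c j), ζ i j) := by
  have bias := expectBU_tauHatClu_sub_totalEffect α β γ ζ c hp0.ne' hq0.ne' hq1.ne
  refine ⟨expectBU_tauHatClu α β γ ζ c hp0.ne' hq0.ne' hq1.ne, bias, fun hq => ?_⟩
  have cross_cluster (j : Fin n) : ∑ i ∈ ({j}ᶜ : Finset (Fin n)),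
      (1 - 2 * (if c i = c j then q else p * q)) * ζ i j =
        (1 - p) * ∑ i ∈ ({j}ᶜ : Finset (Fin n)).filter (fun i => c i ≠ c j), ζ i j := by
    rw [Finset.sum_filter, Finset.mul_sum]
    refine Finset.sum_congr rfl fun i _ => ?_
    by_cases h : c i = c j
    · rw [if_pos h, if_neg (not_not_intro h), hq]
      ring
    · rw [if_neg h, if_pos h, hq]
      ring
  rw [bias, Finset.sum_congr rfl fun j _ => cross_cluster j, ← Finset.mul_sum]
  ring

/-- Theorem 3, edge-level form: Under the two-stage cluster design with
cluster in-experiment probability `p` and treatment probability `q`, the combined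
estimator `τ̂_c(p,q) = τ̂¹_c(p,q) + τ̂²_c(p,q)` satisfies
`E[τ̂_c(p,q)] = (1/n) Σ_{i ≠ j} (β_{i,j} + γ_{i,j} + 2κ_{i,j} ζ_{i,j})`, and its bias
for the total treatment effect `τ = (1/n) Σ_j (Y_j(1) − Y_j(0))` is
`E[τ̂_c(p,q) − τ] = −(1/n) Σ_{i ≠ j} (1 − 2κ_{i,j}) ζ_{i,j}`, where `κ_{i,j} = q` if
`i` and `j` are in the same cluster and `κ_{i,j} = pq` otherwise. In particular, when
`q = 1/2` the bias equals `−((1 − p)/n) Σ_{i ≠ j, c(i) ≠ c(j)} ζ_{i,j}`. -/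
theorem expect_and_bias_tauHatClu_combined
    (n : ℕ) (hn : 1 ≤ n) (α β γ ζ : Fin n → Fin n → ℝ)
    (C : Type) [Fintype C] [DecidableEq C] (c : Fin n → C)
    (p q : ℝ) (hp0 : 0 < p) (hp1 : p ≤ 1) (hq0 : 0 < q) (hq1 : q < 1) :
    expectBU n p q
        (fun b u => tauHat1Clu α β γ ζ c p q b u + tauHat2Clu α β γ ζ c p q b u) =
      (1 / (n : ℝ)) * ∑ j, ∑ i ∈ ({j}ᶜ : Finset (Fin n)),
        (β i j + γ i j + 2 * (if c i = c j then q else p * q) * ζ i j) ∧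
    expectBU n p q
        (fun b u => tauHat1Clu α β γ ζ c p q b u + tauHat2Clu α β γ ζ c p q b u) -
        (1 / (n : ℝ)) *
          ∑ j, (Yagg α β γ ζ (fun _ => (1 : ℝ)) j - Yagg α β γ ζ (fun _ => (0 : ℝ)) j) =
      -(1 / (n : ℝ)) * ∑ j, ∑ i ∈ ({j}ᶜ : Finset (Fin n)),
        ((1 - 2 * (if c i = c j then q else p * q)) * ζ i j) ∧
    (q = 1 / 2 →
      expectBU n p q
          (fun b u => tauHat1Clu α β γ ζ c p q b u + tauHat2Clu α β γ ζ c p q b u) -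
          (1 / (n : ℝ)) *
            ∑ j, (Yagg α β γ ζ (fun _ => (1 : ℝ)) j -
              Yagg α β γ ζ (fun _ => (0 : ℝ)) j) =
        -((1 - p) / (n : ℝ)) *
          ∑ j, ∑ i ∈ ({j}ᶜ : Finset (Fin n)).filter (fun i => c i ≠ c j), ζ i j) :=
  expect_and_bias_tauHatClu_combined_general n α β γ ζ C c p q hp0 hq0 hq1
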